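/- arXiv:1403.6541 — 4 statements merged into one kernel-verified Lean document; each statement's English description precedes it below -/
import Mathlib

section
/- Let r ∈ ℕ, r ≥ 1, n = 2^r, 0 ≤ l ≤ r−1 and 0 ≤ p ≤ 2^l−1. For every ω ∈ ℤ with −2^{r−1}+1 ≤ ω ≤ 2^{r−1} and ω ≠ 0, the modulus of the discrete Fourier transform of the Haar wavelet satisfies |Fφ_{l,p}(ω)| = 2^{l/2−r+1} · sin²(πω/2^{l+1}) / |sin(πω/2^r)|. -/
/-- The discrete Fourier transform of `x ∈ ℂ^(2^r)`:
`Fx(ω) = n^{-1/2} ∑_{t=0}^{n-1} x(t) e^{2πiωt/n}` with `n = 2^r`. -/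
noncomputable def dft (r : ℕ) (x : Fin (2^r) → ℂ) (ω : ℤ) : ℂ :=
  (Real.sqrt (2^r) : ℂ)⁻¹ *
    ∑ t : Fin (2^r), x t * Complex.exp (2 * Real.pi * Complex.I * (ω : ℂ) * ((t : ℕ) : ℂ) / (2^r : ℂ))

/-- The Haar scaling vector `ψ(t) = 2^{-r/2}`. -/
noncomputable def haarPsi (r : ℕ) : Fin (2^r) → ℂ :=
  fun _ => (((2:ℝ) ^ (-(r:ℝ)/2) : ℝ) : ℂ)

/-- The discrete Haar wavelet at scale `j` and position `p`. -/
noncomputable def haarPhi (r j p : ℕ) : Fin (2^r) → ℂ := fun t =>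
  if p * 2^(r-j) ≤ (t:ℕ) ∧ (t:ℕ) < p * 2^(r-j) + 2^(r-j-1) then
    (((2:ℝ) ^ (((j:ℝ) - r)/2) : ℝ) : ℂ)
  else if p * 2^(r-j) + 2^(r-j-1) ≤ (t:ℕ) ∧ (t:ℕ) < (p+1) * 2^(r-j) then
    -(((2:ℝ) ^ (((j:ℝ) - r)/2) : ℝ) : ℂ)
  else 0

/-- The frequency bands: `W_0 = {0,1}` and
`W_j = {-2^j+1,…,-2^{j-1}} ∪ {2^{j-1}+1,…,2^j}` for `j ≥ 1`. -/
noncomputable def bandW (j : ℕ) : Finset ℤ :=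
  if j = 0 then {0, 1}
  else Finset.Icc (-(2:ℤ)^j + 1) (-(2:ℤ)^(j-1)) ∪ Finset.Icc ((2:ℤ)^(j-1) + 1) ((2:ℤ)^j)

/-!
With `q = e^{2πiω/2^r}`, `a = p·2^{r-l}` and `b = 2^{r-l-1}`, the transform of `φ_{l,p}` is a
multiple of the difference of the geometric sums `∑_{a ≤ t < a+b} q^t` and `∑_{a+b ≤ t < a+2b} q^t`,
which equals `-q^a (q^b - 1)^2 / (q - 1)`. Since `|q| = 1` and `|e^{iθ} - 1| = 2|sin(θ/2)|`, taking
moduli gives the formula.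
-/

open Finset

theorem sum_Ico_pow_sub_sum_Ico_pow_mul_sub_one {R : Type*} [CommRing R] (q : R) (a b : ℕ) :
    (∑ t ∈ Ico a (a + b), q ^ t - ∑ t ∈ Ico (a + b) (a + b + b), q ^ t) * (q - 1) =
      -(q ^ a * (q ^ b - 1) ^ 2) := by
  rw [sub_mul, geom_sum_Ico_mul _ (by omega), geom_sum_Ico_mul _ (by omega)]
  ring

/-- At `q = 1` both sides vanish, the right-hand side because `x / 0 = 0`. -/
theorem norm_sum_Ico_pow_sub_sum_Ico_pow {𝕜 : Type*} [NormedField 𝕜] {q : 𝕜} (hq : ‖q‖ = 1)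
    (a b : ℕ) :
    ‖∑ t ∈ Ico a (a + b), q ^ t - ∑ t ∈ Ico (a + b) (a + b + b), q ^ t‖ =
      ‖q ^ b - 1‖ ^ 2 / ‖q - 1‖ := by
  rcases eq_or_ne q 1 with rfl | hq1
  · simp
  have hmul := congrArg norm (sum_Ico_pow_sub_sum_Ico_pow_mul_sub_one q a b)
  rw [norm_mul, norm_neg, norm_mul, norm_pow, hq, one_pow, one_mul, norm_pow] at hmul
  rw [← hmul, mul_div_cancel_right₀ _ (norm_ne_zero_iff.mpr (sub_ne_zero.mpr hq1))]

theorem sum_haarPhi_mul {r l p : ℕ} (hl : l < r) (hp : p < 2 ^ l) (f : ℕ → ℂ) :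
    ∑ t : Fin (2 ^ r), haarPhi r l p t * f t =
      (((2 : ℝ) ^ (((l : ℝ) - r) / 2) : ℝ) : ℂ) *
        (∑ t ∈ Ico (p * 2 ^ (r - l)) (p * 2 ^ (r - l) + 2 ^ (r - l - 1)), f t -
          ∑ t ∈ Ico (p * 2 ^ (r - l) + 2 ^ (r - l - 1))
            (p * 2 ^ (r - l) + 2 ^ (r - l - 1) + 2 ^ (r - l - 1)), f t) := by
  have hend : (p + 1) * 2 ^ (r - l) = p * 2 ^ (r - l) + 2 ^ (r - l - 1) + 2 ^ (r - l - 1) := by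
    rw [add_assoc, ← two_mul, ← pow_succ', Nat.sub_add_cancel (by omega : 1 ≤ r - l)]; ring
  have hfit : p * 2 ^ (r - l) + 2 ^ (r - l - 1) + 2 ^ (r - l - 1) ≤ 2 ^ r :=
    calc _ = (p + 1) * 2 ^ (r - l) := hend.symm
      _ ≤ 2 ^ l * 2 ^ (r - l) := Nat.mul_le_mul_right _ hp
      _ = 2 ^ r := by rw [← pow_add, Nat.add_sub_cancel' hl.le]
  have extend : ∀ {u v : ℕ}, v ≤ 2 ^ r →
      ∑ t ∈ Ico u v, f t = ∑ t ∈ range (2 ^ r), if t ∈ Ico u v then f t else 0 := fun hv => by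
    rw [sum_ite_mem, inter_eq_right.mpr (range_eq_Ico (2 ^ r) ▸ Ico_subset_Ico (Nat.zero_le _) hv)]
  rw [extend ((Nat.le_add_right _ _).trans hfit), extend hfit, ← sum_sub_distrib, mul_sum,
    ← Fin.sum_univ_eq_sum_range]
  refine sum_congr rfl fun t _ => ?_
  simp only [haarPhi, hend, mem_Ico]
  split_ifs <;> first | (exfalso; omega) | ring

theorem norm_exp_I_mul_ofReal_pow_sub_one (θ : ℝ) (b : ℕ) :
    ‖Complex.exp (Complex.I * θ) ^ b - 1‖ = 2 * |Real.sin (b * θ / 2)| := by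
  rw [← Complex.exp_nat_mul, ← mul_left_comm, ← Complex.ofReal_natCast, ← Complex.ofReal_mul,
    Complex.norm_exp_I_mul_ofReal_sub_one, norm_mul, Real.norm_ofNat, Real.norm_eq_abs]

theorem abs_dft_haarPhi_general (r l p : ℕ) (hr : 1 ≤ r) (hl : l ≤ r - 1) (hp : p ≤ 2^l - 1)
    (ω : ℤ) :
    ‖dft r (haarPhi r l p) ω‖ =
      (2:ℝ) ^ ((l:ℝ)/2 - r + 1) * (Real.sin (Real.pi * (ω : ℝ) / 2^(l+1)))^2 /
        |Real.sin (Real.pi * (ω : ℝ) / 2^r)| := by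
  set θ : ℝ := 2 * Real.pi * ω / 2 ^ r
  have hexp (t : ℕ) : Complex.exp (2 * Real.pi * Complex.I * ω * t / 2 ^ r) =
      Complex.exp (Complex.I * θ) ^ t := by
    rw [← Complex.exp_nat_mul]; congr 1; push_cast [θ]; ring
  have hangle : (2 ^ (r - l - 1) : ℕ) * θ / 2 = Real.pi * ω / 2 ^ (l + 1) := by
    have h2r : (2 : ℝ) ^ r = 2 ^ (r - l - 1) * 2 ^ (l + 1) := by
      rw [← pow_add]; congr 1; omega
    simp only [θ, h2r]; push_cast; field_simp
  have hcoef : (Real.sqrt (2 ^ r))⁻¹ * (2 : ℝ) ^ (((l : ℝ) - r) / 2) * 2 =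
      (2 : ℝ) ^ ((l : ℝ) / 2 - r + 1) := by
    rw [Real.sqrt_eq_rpow, ← Real.rpow_natCast, ← Real.rpow_mul zero_le_two,
      ← Real.rpow_neg zero_le_two, ← Real.rpow_add two_pos, ← Real.rpow_add_one two_ne_zero]
    ring_nf
  simp only [dft, hexp]
  rw [sum_haarPhi_mul (by omega) (Nat.lt_of_le_sub_one (Nat.two_pow_pos l) hp), norm_mul,
    norm_mul, norm_sum_Ico_pow_sub_sum_Ico_pow (Complex.norm_exp_I_mul_ofReal θ),
    norm_exp_I_mul_ofReal_pow_sub_one, hangle, Complex.norm_exp_I_mul_ofReal_sub_one,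
    show θ / 2 = Real.pi * ω / 2 ^ r by ring, norm_mul, Real.norm_ofNat, Real.norm_eq_abs,
    norm_inv, Complex.norm_real, Complex.norm_real, Real.norm_of_nonneg (Real.sqrt_nonneg _),
    Real.norm_of_nonneg (by positivity), ← hcoef, mul_pow, sq_abs]
  ring

/-- For `r ≥ 1`, `0 ≤ l ≤ r-1`, `0 ≤ p ≤ 2^l-1`, and nonzero `ω ∈ {-2^{r-1}+1,…,2^{r-1}}`:
`|Fφ_{l,p}(ω)| = 2^{l/2-r+1} sin²(πω/2^{l+1}) / |sin(πω/2^r)|`. -/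
theorem abs_dft_haarPhi (r l p : ℕ) (hr : 1 ≤ r) (hl : l ≤ r - 1) (hp : p ≤ 2^l - 1)
    (ω : ℤ) (hω₁ : -(2:ℤ)^(r-1) + 1 ≤ ω) (hω₂ : ω ≤ (2:ℤ)^(r-1)) (hω0 : ω ≠ 0) :
    ‖dft r (haarPhi r l p) ω‖ =
      (2:ℝ) ^ ((l:ℝ)/2 - r + 1) * (Real.sin (Real.pi * (ω : ℝ) / 2^(l+1)))^2 /
        |Real.sin (Real.pi * (ω : ℝ) / 2^r)| :=
  abs_dft_haarPhi_general r l p hr hl hp ω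
end

section
/- Let r ∈ ℕ, r ≥ 1, n = 2^r. For all 0 ≤ j ≤ l ≤ r−1, 0 ≤ p ≤ 2^l−1 and every ω ∈ W_j, the discrete Fourier transform of the Haar wavelet satisfies the stronger bound |Fφ_{l,p}(ω)| ≤ (π²/4) · 2^{−j/2} · 2^{−3(l−j)/2}. -/
/-
With `z = e^{iθ}`, `θ = 2πω/n`, `m = 2^{r-l-1}` and `c = 2^{(l-r)/2}`, the sum defining
`Fφ_{l,p}(ω)` is `n^{-1/2} c z^{2mp} (1 + z + ⋯ + z^{m-1}) (1 - z^m)`. Since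
`(1 + ⋯ + z^{m-1}) (1 - z) = 1 - z^m`, its modulus is `n^{-1/2} c |1 - z^m|² / |1 - z|`.
The numerator is at most `(m|θ|)²`, and Jordan's inequality gives `|1 - z| ≥ 2|θ|/π` because
`|θ| ≤ π` (as `|ω| ≤ 2^j ≤ n/2`). What remains is `π² c m² |ω| / n^{3/2}`, which for `|ω| = 2^j`
is exactly the claimed bound.
-/

open Complex Finset

lemma abs_le_of_mem_bandW {j : ℕ} {ω : ℤ} (hω : ω ∈ bandW j) : |ω| ≤ 2 ^ j := by
  unfold bandW at hω
  split_ifs at hω with hj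
  · subst hj; simp only [mem_insert, mem_singleton] at hω; rcases hω with rfl | rfl <;> norm_num
  · have hpow : (2 : ℤ) ^ j = 2 * 2 ^ (j - 1) := by rw [← pow_succ']; congr 1; omega
    have hpos : (0 : ℤ) < 2 ^ (j - 1) := by positivity
    simp only [mem_union, mem_Icc] at hω
    rw [abs_le]; omega

lemma dft_eq_sum_mul_pow (r : ℕ) (x : Fin (2 ^ r) → ℂ) (ω : ℤ) :
    dft r x ω = (√(2 ^ r) : ℂ)⁻¹ *
      ∑ t : Fin (2 ^ r), x t * exp (I * ((2 * Real.pi * ω / 2 ^ r : ℝ) : ℂ)) ^ (t : ℕ) := by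
  unfold dft
  congr 1
  refine sum_congr rfl fun t _ => ?_
  rw [← exp_nat_mul]
  push_cast
  ring_nf

lemma sum_range_step_mul_pow {R : Type*} [CommRing R] {N A m : ℕ} (hN : A + 2 * m ≤ N)
    (c z : R) (f : ℕ → R)
    (hf : ∀ t < N,
      f t = if A ≤ t ∧ t < A + m then c else if A + m ≤ t ∧ t < A + 2 * m then -c else 0) :
    ∑ t ∈ range N, f t * z ^ t = c * z ^ A * (∑ k ∈ range m, z ^ k) * (1 - z ^ m) := by
  have hsupp : ∑ t ∈ range N, f t * z ^ t = ∑ t ∈ Ico A (A + 2 * m), f t * z ^ t := by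
    refine (sum_subset (fun t ht => ?_) fun t ht ht' => ?_).symm
    · simp only [mem_Ico, mem_range] at ht ⊢; omega
    · simp only [mem_Ico, mem_range] at ht ht'
      rw [hf t ht, if_neg (by omega), if_neg (by omega), zero_mul]
  have hfirst : ∀ k ∈ range m, f (A + k) * z ^ (A + k) = c * z ^ A * z ^ k := fun k hk => by
    rw [mem_range] at hk
    rw [hf _ (by omega), if_pos (by omega), pow_add, mul_assoc]
  have hsecond : ∀ k ∈ range m,
      f (A + (m + k)) * z ^ (A + (m + k)) = -(c * z ^ A * z ^ k * z ^ m) := fun k hk => by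
    rw [mem_range] at hk
    rw [hf _ (by omega), if_neg (by omega), if_pos (by omega), pow_add, pow_add]
    ring
  rw [hsupp, sum_Ico_eq_sum_range, Nat.add_sub_cancel_left, two_mul, sum_range_add,
    sum_congr rfl hfirst, sum_congr rfl hsecond, sum_neg_distrib, ← sum_mul, ← mul_sum]
  ring

lemma sum_haarPhi_mul_pow {r l p : ℕ} (hl : l < r) (hp : p < 2 ^ l) (z : ℂ) :
    ∑ t : Fin (2 ^ r), haarPhi r l p t * z ^ (t : ℕ) =
      (((2 : ℝ) ^ (((l : ℝ) - r) / 2) : ℝ) : ℂ) * z ^ (p * 2 ^ (r - l)) *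
        (∑ k ∈ range (2 ^ (r - l - 1)), z ^ k) * (1 - z ^ 2 ^ (r - l - 1)) := by
  set c : ℂ := (((2 : ℝ) ^ (((l : ℝ) - r) / 2) : ℝ) : ℂ)
  set A := p * 2 ^ (r - l)
  set m := 2 ^ (r - l - 1)
  have hend : A + 2 * m = (p + 1) * 2 ^ (r - l) := by
    rw [add_mul, one_mul, ← pow_succ', Nat.sub_add_cancel (Nat.sub_pos_of_lt hl)]
  have hN : A + 2 * m ≤ 2 ^ r :=
    calc A + 2 * m ≤ 2 ^ l * 2 ^ (r - l) := hend ▸ Nat.mul_le_mul_right _ hp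
      _ = 2 ^ r := by rw [← pow_add, Nat.add_sub_cancel' hl.le]
  let f : ℕ → ℂ := fun t =>
    if A ≤ t ∧ t < A + m then c else if A + m ≤ t ∧ t < A + 2 * m then -c else 0
  calc ∑ t : Fin (2 ^ r), haarPhi r l p t * z ^ (t : ℕ)
        = ∑ t : Fin (2 ^ r), f t * z ^ (t : ℕ) := by simp only [f, hend]; rfl
    _ = ∑ t ∈ range (2 ^ r), f t * z ^ t := Fin.sum_univ_eq_sum_range (fun t => f t * z ^ t) _
    _ = _ := sum_range_step_mul_pow hN c z f fun _ _ => rfl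

lemma norm_dft_haarPhi {r l p : ℕ} (hl : l < r) (hp : p < 2 ^ l) (ω : ℤ) :
    ‖dft r (haarPhi r l p) ω‖ = (√(2 ^ r))⁻¹ * (2 : ℝ) ^ (((l : ℝ) - r) / 2) *
      (‖∑ k ∈ range (2 ^ (r - l - 1)), exp (I * ((2 * Real.pi * ω / 2 ^ r : ℝ) : ℂ)) ^ k‖ *
        ‖1 - exp (I * ((2 * Real.pi * ω / 2 ^ r : ℝ) : ℂ)) ^ 2 ^ (r - l - 1)‖) := by
  rw [dft_eq_sum_mul_pow, sum_haarPhi_mul_pow hl hp, norm_mul, norm_inv, norm_mul, norm_mul,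
    norm_mul, norm_pow, norm_exp_I_mul_ofReal, one_pow, mul_one, Complex.norm_real,
    Complex.norm_real, Real.norm_of_nonneg (Real.sqrt_nonneg _),
    Real.norm_of_nonneg (by positivity)]
  ring

lemma two_div_pi_mul_abs_le_norm_exp_I_mul_ofReal_sub_one {θ : ℝ} (hθ : |θ| ≤ Real.pi) :
    2 / Real.pi * |θ| ≤ ‖exp (I * θ) - 1‖ := by
  have hθ2 : |θ / 2| ≤ Real.pi / 2 := by rw [abs_div, abs_two]; linarith
  rw [norm_exp_I_mul_ofReal_sub_one, norm_mul, Real.norm_eq_abs, Real.norm_eq_abs, abs_two]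
  have hjordan := Real.mul_abs_le_abs_sin hθ2
  rw [abs_div, abs_two] at hjordan
  linarith

lemma norm_geom_sum_mul_norm_one_sub_pow_le {θ : ℝ} (hθ : |θ| ≤ Real.pi) (m : ℕ) :
    ‖∑ k ∈ range m, exp (I * θ) ^ k‖ * ‖1 - exp (I * θ) ^ m‖ ≤
      Real.pi * m ^ 2 * |θ| / 2 := by
  rcases eq_or_ne θ 0 with rfl | hθ0
  · simp
  set z := exp (I * θ)
  have hlower : 2 / Real.pi * |θ| ≤ ‖1 - z‖ := by
    rw [norm_sub_rev]; exact two_div_pi_mul_abs_le_norm_exp_I_mul_ofReal_sub_one hθ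
  have hupper : ‖1 - z ^ m‖ ≤ m * |θ| := by
    rw [norm_sub_rev, ← exp_nat_mul,
      show (m : ℂ) * (I * θ) = I * ((m * θ : ℝ) : ℂ) by push_cast; ring]
    simpa [abs_mul] using Real.norm_exp_I_mul_ofReal_sub_one_le (x := m * θ)
  have hpos : 0 < 2 / Real.pi * |θ| := by positivity
  have hgeom : ‖∑ k ∈ range m, z ^ k‖ * ‖1 - z‖ = ‖1 - z ^ m‖ := by
    rw [← norm_mul, geom_sum_mul_neg]
  calc ‖∑ k ∈ range m, z ^ k‖ * ‖1 - z ^ m‖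
      = ‖1 - z ^ m‖ ^ 2 / ‖1 - z‖ := by
        rw [← hgeom]; field_simp [(hpos.trans_le hlower).ne']
    _ ≤ (m * |θ|) ^ 2 / (2 / Real.pi * |θ|) := by gcongr
    _ = Real.pi * m ^ 2 * |θ| / 2 := by field_simp

section
open Real

lemma two_rpow_half_mul (x : ℝ) : (2 : ℝ) ^ (x / 2) = √2 ^ x := by
  rw [sqrt_eq_rpow, ← rpow_mul zero_le_two]; ring_nf

lemma haar_scaling_identity {r l : ℕ} (hlr : l < r) (j : ℕ) :
    (√(2 ^ r))⁻¹ * (2 : ℝ) ^ (((l : ℝ) - r) / 2) *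
        (π * ((2 ^ (r - l - 1) : ℕ) : ℝ) ^ 2 * (2 * π * 2 ^ j / 2 ^ r) / 2) =
      (π ^ 2 / 4) * (2 : ℝ) ^ (-(j : ℝ) / 2) * (2 : ℝ) ^ (-(3 * ((l : ℝ) - j)) / 2) := by
  obtain ⟨s, rfl⟩ : ∃ s, r = l + 1 + s := ⟨r - l - 1, by omega⟩
  have hw : (0 : ℝ) < √2 := by positivity
  have hsq : ∀ n : ℕ, (2 : ℝ) ^ n = (√2 ^ n) ^ 2 := fun n => by
    rw [← pow_mul, mul_comm, pow_mul, sq_sqrt zero_le_two]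
  rw [two_rpow_half_mul, two_rpow_half_mul, two_rpow_half_mul, rpow_sub hw, rpow_neg hw.le,
    show -(3 * ((l : ℝ) - j)) = ((3 * j : ℕ) : ℝ) - ((3 * l : ℕ) : ℝ) by push_cast; ring,
    rpow_sub hw, hsq, sqrt_sq (by positivity)]
  simp only [rpow_natCast, show l + 1 + s - l - 1 = s by omega, Nat.cast_pow, Nat.cast_ofNat, hsq]
  have h4 : √2 ^ 4 = 4 := by
    rw [show 4 = 2 * 2 from rfl, pow_mul, sq_sqrt zero_le_two]; norm_num
  field_simp
  linear_combination -(√2 ^ (4 * l) * √2 ^ (4 * s) * √2 ^ (3 * j)) * h4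

end

/-- For `r ≥ 1`, `0 ≤ j ≤ l ≤ r-1`, `0 ≤ p ≤ 2^l-1` and every `ω ∈ W_j`, the stronger bound
`|Fφ_{l,p}(ω)| ≤ (π²/4) 2^{-j/2} 2^{-3(l-j)/2}`. -/
theorem abs_dft_haarPhi_le_of_le (r j l p : ℕ) (hr : 1 ≤ r) (hjl : j ≤ l) (hl : l ≤ r - 1)
    (hp : p ≤ 2^l - 1) (ω : ℤ) (hω : ω ∈ bandW j) :
    ‖dft r (haarPhi r l p) ω‖ ≤
      (Real.pi^2 / 4) * (2:ℝ)^(-(j:ℝ)/2) * (2:ℝ)^(-(3 * ((l:ℝ) - (j:ℝ)))/2) := by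
  have hlr : l < r := by omega
  have hpl : p < 2 ^ l := by have := Nat.one_le_two_pow (n := l); omega
  set θ : ℝ := 2 * Real.pi * ω / 2 ^ r
  have hθ : |θ| ≤ 2 * Real.pi * 2 ^ j / 2 ^ r := by
    have hωj : |(ω : ℝ)| ≤ 2 ^ j := by exact_mod_cast abs_le_of_mem_bandW hω
    rw [abs_div, abs_mul, abs_of_pos Real.two_pi_pos, abs_of_pos (by positivity : (0 : ℝ) < 2 ^ r)]
    gcongr
  have hθπ : |θ| ≤ Real.pi := by
    refine hθ.trans ?_
    rw [div_le_iff₀ (by positivity)]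
    have hjr : (2 : ℝ) ^ j * 2 ≤ 2 ^ r := by
      rw [← pow_succ]; exact pow_le_pow_right₀ one_le_two (by omega)
    nlinarith [Real.pi_pos]
  rw [norm_dft_haarPhi hlr hpl]
  calc _ ≤ (√(2 ^ r))⁻¹ * (2 : ℝ) ^ (((l : ℝ) - r) / 2) *
        (Real.pi * ((2 ^ (r - l - 1) : ℕ) : ℝ) ^ 2 * |θ| / 2) := by
        gcongr; exact norm_geom_sum_mul_norm_one_sub_pow_le hθπ _
    _ ≤ _ := by gcongr
    _ = _ := haar_scaling_identity hlr j
end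

section
/- Let r ∈ ℕ, r ≥ 1, let 1 ≤ l ≤ r−1 and 1 ≤ j ≤ r−1, let z ∈ ℂ^{2^l}, and let G(x) = Σ_{p=0}^{2^l−1} z_p e^{2πipx}. If j ≥ l then Σ_{ω∈W_j} |G(ω/2^l)|² = 2^j · ‖z‖₂², and if j < l then Σ_{ω∈W_j} |G(ω/2^l)|² ≤ 2^l · ‖z‖₂². -/
/-- The 1-periodic trigonometric polynomial `G(x) = ∑_{p=0}^{2^l-1} z_p e^{2πipx}`. -/
noncomputable def trigPoly (l : ℕ) (z : Fin (2^l) → ℂ) (x : ℝ) : ℂ :=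
  ∑ p : Fin (2^l), z p * Complex.exp (2 * Real.pi * Complex.I * ((p : ℕ) : ℂ) * (x : ℂ))

open Finset ComplexConjugate

theorem Finset.sum_Ico_add_sum_Ico {α M : Type*} [LinearOrder α] [LocallyFiniteOrder α]
    [AddCommMonoid M] (f : α → M) {a b c : α} (hab : a ≤ b) (hbc : b ≤ c) :
    ∑ x ∈ Ico a b, f x + ∑ x ∈ Ico b c, f x = ∑ x ∈ Ico a c, f x := by
  rw [← sum_union (Ico_disjoint_Ico_consecutive a b c), Ico_union_Ico_eq_Ico hab hbc]

theorem Function.Periodic.sum_Ico_add_eq {M : Type*} [AddCommMonoid M] {f : ℤ → M} {n : ℤ}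
    (hf : Function.Periodic f n) (hn : 0 ≤ n) (a : ℤ) :
    ∑ ω ∈ Ico a (a + n), f ω = ∑ ω ∈ Ico 0 n, f ω := by
  have hinj : Set.InjOn (· % n) (Ico a (a + n) : Set ℤ) := by
    rw [← Finset.card_image_iff, Int.image_Ico_emod _ _ hn]
    simp
  rw [← Int.image_Ico_emod a n hn, sum_image hinj]
  refine sum_congr rfl fun ω _ => ?_
  rw [Int.emod_def, mul_comm, ← smul_eq_mul, hf.sub_zsmul_eq]

theorem Function.Periodic.sum_Ico_add_mul_eq {M : Type*} [AddCommMonoid M] {f : ℤ → M} {n : ℤ}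
    (hf : Function.Periodic f n) (hn : 0 ≤ n) (a : ℤ) (c : ℕ) :
    ∑ ω ∈ Ico a (a + c * n), f ω = c • ∑ ω ∈ Ico 0 n, f ω := by
  induction c generalizing a with
  | zero => simp
  | succ c ih =>
    have hsplit : a + ↑(c + 1) * n = a + n + c * n := by push_cast; ring
    have hcn : 0 ≤ (c : ℤ) * n := by positivity
    rw [hsplit, ← sum_Ico_add_sum_Ico f (b := a + n) (by omega) (by omega), hf.sum_Ico_add_eq hn,
      ih, succ_nsmul']

theorem IsPrimitiveRoot.geom_sum_zpow_eq_ite {K : Type*} [Field K] {ζ : K} {N : ℕ}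
    (hζ : IsPrimitiveRoot ζ N) (a : ℤ) :
    ∑ k ∈ range N, (ζ ^ a) ^ k = if (N : ℤ) ∣ a then (N : K) else 0 := by
  split_ifs with ha
  · simp [(hζ.zpow_eq_one_iff_dvd a).mpr ha]
  · have hne : ζ ^ a ≠ 1 := fun h => ha ((hζ.zpow_eq_one_iff_dvd a).mp h)
    rw [geom_sum_eq hne, ← zpow_natCast, ← zpow_mul, mul_comm, zpow_mul, zpow_natCast,
      hζ.pow_eq_one, one_zpow, sub_self, zero_div]

theorem Fin.intCast_dvd_sub_iff {N : ℕ} (p q : Fin N) : (N : ℤ) ∣ (p : ℤ) - q ↔ p = q := by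
  refine ⟨fun h => ?_, fun h => by simp [h]⟩
  have := Int.eq_zero_of_dvd_of_natAbs_lt_natAbs h (by omega)
  omega

theorem IsPrimitiveRoot.pow_mul_conj_pow_mul {ζ : ℂ} {N : ℕ} (hζ : IsPrimitiveRoot ζ N)
    (hN : N ≠ 0) (p q k : ℕ) :
    ζ ^ (p * k) * conj (ζ ^ (q * k)) = (ζ ^ ((p : ℤ) - q)) ^ k := by
  have hζ0 : ζ ≠ 0 := hζ.ne_zero hN
  rw [map_pow, ← Complex.inv_eq_conj (hζ.norm'_eq_one hN), ← zpow_natCast (ζ ^ _) k, ← zpow_mul,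
    sub_mul, zpow_sub₀ hζ0, inv_pow, div_eq_mul_inv]
  norm_cast

theorem IsPrimitiveRoot.parseval {ζ : ℂ} {N : ℕ} (hζ : IsPrimitiveRoot ζ N)
    (z : Fin N → ℂ) :
    ∑ k ∈ range N, ‖∑ p, z p * ζ ^ ((p : ℕ) * k)‖ ^ 2 = N * ∑ p, ‖z p‖ ^ 2 := by
  rcases eq_or_ne N 0 with rfl | hN
  · simp
  apply Complex.ofReal_injective
  push_cast
  calc ∑ k ∈ range N, (‖∑ p, z p * ζ ^ ((p : ℕ) * k)‖ : ℂ) ^ 2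
      = ∑ k ∈ range N, ∑ p, ∑ q, z p * conj (z q) * (ζ ^ ((p : ℤ) - (q : ℕ))) ^ k := by
        refine sum_congr rfl fun k _ => ?_
        rw [← Complex.mul_conj', map_sum, sum_mul_sum]
        refine sum_congr rfl fun p _ => sum_congr rfl fun q _ => ?_
        rw [map_mul, mul_mul_mul_comm, hζ.pow_mul_conj_pow_mul hN]
    _ = ∑ p, ∑ q, z p * conj (z q) * ∑ k ∈ range N, (ζ ^ ((p : ℤ) - (q : ℕ))) ^ k := by
        rw [sum_comm]
        simp only [mul_sum]
        exact sum_congr rfl fun p _ => sum_comm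
    _ = N * ∑ p, (‖z p‖ : ℂ) ^ 2 := by
        simp [hζ.geom_sum_zpow_eq_ite, Fin.intCast_dvd_sub_iff, mul_sum, Complex.mul_conj',
          mul_comm]

theorem trigPoly_periodic (l : ℕ) (z : Fin (2 ^ l) → ℂ) : Function.Periodic (trigPoly l z) 1 := by
  intro x
  refine sum_congr rfl fun p _ => ?_
  rw [Complex.ofReal_add, Complex.ofReal_one, mul_add, mul_one, Complex.exp_add, mul_comm _ (p : ℂ),
    Complex.exp_nat_mul_two_pi_mul_I, mul_one]

theorem trigPoly_natCast_div (l : ℕ) (z : Fin (2 ^ l) → ℂ) (k : ℕ) :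
    trigPoly l z (k / 2 ^ l) =
      ∑ p, z p * Complex.exp (2 * Real.pi * Complex.I / (2 ^ l : ℕ)) ^ ((p : ℕ) * k) := by
  refine sum_congr rfl fun p _ => ?_
  rw [← Complex.exp_nat_mul]
  push_cast
  ring_nf

theorem periodic_norm_sq_trigPoly_intCast_div (l : ℕ) (z : Fin (2 ^ l) → ℂ) :
    Function.Periodic (fun ω : ℤ => ‖trigPoly l z (ω / 2 ^ l)‖ ^ 2) (2 ^ l) := by
  intro ω
  simp only [Int.cast_add, Int.cast_pow, Int.cast_ofNat]
  rw [add_div, div_self (by positivity), trigPoly_periodic]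

theorem sum_Ico_norm_sq_trigPoly_intCast_div (l : ℕ) (z : Fin (2 ^ l) → ℂ) :
    ∑ ω ∈ Ico 0 (2 ^ l : ℤ), ‖trigPoly l z (ω / 2 ^ l)‖ ^ 2 = 2 ^ l * ∑ p, ‖z p‖ ^ 2 := by
  have hrange : ∑ ω ∈ Ico 0 (2 ^ l : ℤ), ‖trigPoly l z (ω / 2 ^ l)‖ ^ 2
      = ∑ k ∈ range (2 ^ l), ‖trigPoly l z (k / 2 ^ l)‖ ^ 2 := by
    have h : ((2 : ℤ) ^ l).toNat = 2 ^ l := by norm_cast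
    simp [Int.Ico_eq_finset_map, h]
  rw [hrange]
  simp_rw [trigPoly_natCast_div]
  exact_mod_cast (Complex.isPrimitiveRoot_exp _ (by positivity)).parseval z

theorem bandW_succ (i : ℕ) :
    bandW (i + 1) = Ico (1 - 2 * 2 ^ i) (1 - 2 ^ i) ∪ Ico (2 ^ i + 1) (2 * 2 ^ i + 1) := by
  ext ω
  simp only [bandW, Nat.add_one_ne_zero, ↓reduceIte, Nat.add_sub_cancel, pow_succ, mem_union,
    mem_Icc, mem_Ico]
  omega

theorem bandW_subset_Ico (j : ℕ) : bandW j ⊆ Ico (1 - 2 ^ j) (1 + 2 ^ j) := by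
  rcases j with _ | i
  · decide
  · rw [bandW_succ, pow_succ]
    intro ω
    simp only [mem_union, mem_Ico]
    omega

theorem Function.Periodic.sum_bandW {M : Type*} [AddCommMonoid M] {f : ℤ → M} {j : ℕ}
    (hj : j ≠ 0) (hf : Function.Periodic f (2 ^ j)) :
    ∑ ω ∈ bandW j, f ω = ∑ ω ∈ Ico 1 (1 + 2 ^ j), f ω := by
  obtain ⟨i, rfl⟩ := Nat.exists_eq_add_one_of_ne_zero hj
  have hm : (0 : ℤ) < 2 ^ i := by positivity
  rw [pow_succ'] at hf ⊢
  have hshift : ∑ ω ∈ Ico (1 - 2 * 2 ^ i) (1 - 2 ^ i), f ω = ∑ ω ∈ Ico 1 (2 ^ i + 1), f ω :=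
    calc ∑ ω ∈ Ico (1 - 2 * 2 ^ i) (1 - 2 ^ i), f ω
        = ∑ ω ∈ Ico (1 - 2 * 2 ^ i) (1 - 2 ^ i), f (ω + 2 * 2 ^ i) :=
          sum_congr rfl fun ω _ => (hf ω).symm
      _ = ∑ ω ∈ Ico 1 (2 ^ i + 1), f ω := by rw [sum_Ico_add']; congr 2 <;> ring
  rw [bandW_succ, sum_union (disjoint_left.mpr fun ω h₁ h₂ => by simp only [mem_Ico] at h₁ h₂; omega),
    hshift, sum_Ico_add_sum_Ico f (by omega) (by omega), add_comm]

theorem sum_sq_trigPoly_bandW_general (l j : ℕ) (hj1 : 1 ≤ j) (z : Fin (2^l) → ℂ) :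
    (l ≤ j → ∑ ω ∈ bandW j, ‖trigPoly l z ((ω : ℝ) / 2^l)‖^2 =
        2^j * ∑ p : Fin (2^l), ‖z p‖^2) ∧
    (j < l → ∑ ω ∈ bandW j, ‖trigPoly l z ((ω : ℝ) / 2^l)‖^2 ≤
        2^l * ∑ p : Fin (2^l), ‖z p‖^2) := by
  have hF := periodic_norm_sq_trigPoly_intCast_div l z
  refine ⟨fun hlj => ?_, fun hjl => ?_⟩
  · obtain ⟨c, rfl⟩ := Nat.exists_eq_add_of_le' hlj
    have hperiod : ((2 ^ c : ℕ) : ℤ) * 2 ^ l = 2 ^ (c + l) := by push_cast; ring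
    have hF' := hF.nat_mul (2 ^ c)
    rw [hperiod] at hF'
    rw [hF'.sum_bandW (by omega), ← hperiod, hF.sum_Ico_add_mul_eq (by positivity),
      sum_Ico_norm_sq_trigPoly_intCast_div, nsmul_eq_mul]
    push_cast
    ring
  · have hlen : 1 + (2 : ℤ) ^ j ≤ 1 - 2 ^ j + 2 ^ l := by
      have : (2 : ℤ) ^ (j + 1) ≤ 2 ^ l := pow_le_pow_right₀ (by norm_num) hjl
      rw [pow_succ] at this
      omega
    calc ∑ ω ∈ bandW j, ‖trigPoly l z ((ω : ℝ) / 2^l)‖^2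
        ≤ ∑ ω ∈ Ico (1 - 2 ^ j : ℤ) (1 - 2 ^ j + 2 ^ l), ‖trigPoly l z ((ω : ℝ) / 2^l)‖^2 :=
          sum_le_sum_of_subset_of_nonneg ((bandW_subset_Ico j).trans (Ico_subset_Ico_right hlen))
            fun _ _ _ => by positivity
      _ = ∑ ω ∈ Ico 0 (2 ^ l : ℤ), ‖trigPoly l z ((ω : ℝ) / 2^l)‖^2 :=
          hF.sum_Ico_add_eq (by positivity) _
      _ = 2^l * ∑ p : Fin (2^l), ‖z p‖^2 := sum_Ico_norm_sq_trigPoly_intCast_div l z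

/-- For `1 ≤ l, j ≤ r-1` and `G(x) = ∑_{p=0}^{2^l-1} z_p e^{2πipx}`:
if `j ≥ l` then `∑_{ω ∈ W_j} |G(ω/2^l)|² = 2^j ‖z‖₂²`, and if `j < l` then
`∑_{ω ∈ W_j} |G(ω/2^l)|² ≤ 2^l ‖z‖₂²`. -/
theorem sum_sq_trigPoly_bandW (r l j : ℕ) (hr : 1 ≤ r) (hl1 : 1 ≤ l) (hl2 : l ≤ r - 1)
    (hj1 : 1 ≤ j) (hj2 : j ≤ r - 1) (z : Fin (2^l) → ℂ) :
    (l ≤ j → ∑ ω ∈ bandW j, ‖trigPoly l z ((ω : ℝ) / 2^l)‖^2 =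
        2^j * ∑ p : Fin (2^l), ‖z p‖^2) ∧
    (j < l → ∑ ω ∈ bandW j, ‖trigPoly l z ((ω : ℝ) / 2^l)‖^2 ≤
        2^l * ∑ p : Fin (2^l), ‖z p‖^2) :=
  sum_sq_trigPoly_bandW_general l j hj1 z
end

section
/- There exists a constant C > 0, independent of all parameters, such that for every r ∈ ℕ with r ≥ 1, n = 2^r, and 1 ≤ j ≤ r−1, and for every z ∈ ℂ² with ‖z‖₂ = 1, one has Σ_{ω∈W_j} |Fψ(ω)·z_0 + Fφ_{0,0}(ω)·z_1|² ≤ C · 2^{−j}; equivalently, ‖U_{j0}‖₂ ≤ C' · 2^{−j/2} for a universal constant C'. -/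
theorem bandW_nonempty (j : ℕ) : (bandW j).Nonempty := by
  unfold bandW
  split
  · exact ⟨0, by simp⟩
  · refine Finset.Nonempty.mono Finset.subset_union_right ⟨(2:ℤ)^j, ?_⟩
    rw [Finset.mem_Icc]
    refine ⟨?_, le_refl _⟩
    have h1 : (1:ℤ) ≤ (2:ℤ)^(j-1) := one_le_pow₀ (by norm_num)
    have h2 : (2:ℤ)^(j-1) + (2:ℤ)^(j-1) ≤ (2:ℤ)^j := by
      rw [← two_mul, ← pow_succ']
      exact pow_le_pow_right₀ (by norm_num) (by omega)
    omega

/-- The number of columns of the Fourier–Haar block `U_{jl}`: level `0` contributes the two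
vectors `ψ, φ_{0,0}`, and level `l ≥ 1` contributes the `2^l` wavelets `φ_{l,p}`. -/
def numCols (l : ℕ) : ℕ := if l = 0 then 2 else 2^l

theorem numCols_pos (l : ℕ) : 0 < numCols l := by
  unfold numCols; split <;> positivity

/-- The entry of the Fourier–Haar block `U_{jl}` in row `ω` and column `q`. -/
noncomputable def Uentry (r l : ℕ) (ω : ℤ) (q : ℕ) : ℂ :=
  if l = 0 then (if q = 0 then dft r (haarPsi r) ω else dft r (haarPhi r 0 0) ω)
  else dft r (haarPhi r l q) ω

/-- The coherence `μ(U_{jl}) = max_{ω,q} |(U_{jl})_{ω,q}|²` of the Fourier–Haar block. -/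
noncomputable def coherence (r j l : ℕ) : ℝ :=
  ((bandW j) ×ˢ Finset.range (numCols l)).sup'
    (Finset.Nonempty.product (bandW_nonempty j)
      ⟨0, Finset.mem_range.mpr (numCols_pos l)⟩)
    (fun q => ‖Uentry r l q.1 q.2‖ ^ 2)

/-- The Fourier–Haar block `U_{jl}`, with rows indexed by `ω ∈ W_j` and columns given by the
DFT of the level-`l` Haar vectors. -/
noncomputable def Umat (r j l : ℕ) : Matrix (bandW j) (Fin (numCols l)) ℂ :=
  fun ω q => Uentry r l (ω : ℤ) (q : ℕ)

/-- The `ℓ² → ℓ²` operator norm (largest singular value) of the Fourier–Haar block. -/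
noncomputable def UopNorm (r j l : ℕ) : ℝ :=
  ‖LinearMap.toContinuousLinearMap (Matrix.toEuclideanLin (Umat r j l))‖

/-- The `(j,l)`-th local coherence `μ(j,l) = √μ(U_{jl}) · max_{l' < r} √μ(U_{jl'})`. -/
noncomputable def localCoh (r : ℕ) (hr : 1 ≤ r) (j l : ℕ) : ℝ :=
  Real.sqrt (coherence r j l) *
    (Finset.range r).sup' ⟨0, Finset.mem_range.mpr hr⟩
      (fun l' => Real.sqrt (coherence r j l'))

open Finset Real

lemma geom_sum_eq_zero_of_pow_eq_one {K : Type*} [DivisionRing K] {x : K} {n : ℕ}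
    (hx : x ≠ 1) (hxn : x ^ n = 1) : ∑ i ∈ range n, x ^ i = 0 := by
  rw [geom_sum_eq hx, hxn, sub_self, zero_div]

lemma norm_geom_sum_le_of_norm_eq_one {K : Type*} [NormedField K] {x : K} (hx : ‖x‖ = 1)
    (hx1 : x ≠ 1) (n : ℕ) : ‖∑ i ∈ range n, x ^ i‖ ≤ 2 / ‖x - 1‖ := by
  rw [geom_sum_eq hx1, norm_div]
  gcongr
  calc ‖x ^ n - 1‖ ≤ ‖x ^ n‖ + ‖(1 : K)‖ := norm_sub_le _ _
    _ = 2 := by rw [norm_pow, hx, one_pow, norm_one]; norm_num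

lemma two_div_pi_mul_abs_le_norm_exp_I_mul_ofReal_sub_one_s12 {x : ℝ} (hx : |x| ≤ π) :
    2 / π * |x| ≤ ‖Complex.exp (Complex.I * x) - 1‖ := by
  have hsin := mul_abs_le_abs_sin (x := x / 2) (by rw [abs_div, abs_two]; linarith)
  rw [Complex.norm_exp_I_mul_ofReal_sub_one, norm_mul, Real.norm_two, Real.norm_eq_abs]
  rw [abs_div, abs_two] at hsin
  linarith

lemma two_rpow_neg_div_two (r : ℕ) : (2 : ℝ) ^ (-(r : ℝ) / 2) = (√(2 ^ r))⁻¹ := by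
  rw [Real.sqrt_eq_rpow, ← Real.rpow_natCast, ← Real.rpow_mul zero_le_two, ← Real.rpow_neg
    zero_le_two, neg_div, one_div, div_eq_mul_inv]

lemma inv_sqrt_mul_inv_sqrt_two_pow (r : ℕ) :
    ((√(2 ^ r) : ℝ) : ℂ)⁻¹ * ((√(2 ^ r))⁻¹ : ℝ) = ((2 : ℂ) ^ r)⁻¹ := by
  rw [Complex.ofReal_inv, ← mul_inv, ← Complex.ofReal_mul, Real.mul_self_sqrt (by positivity)]
  push_cast
  rfl

noncomputable def dftRoot (r : ℕ) (ω : ℤ) : ℂ :=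
  Complex.exp (Complex.I * ((2 * π * ω / 2 ^ r : ℝ) : ℂ))

lemma dft_eq_sum_dftRoot_pow (r : ℕ) (x : Fin (2 ^ r) → ℂ) (ω : ℤ) :
    dft r x ω = ((√(2 ^ r) : ℝ) : ℂ)⁻¹ * ∑ t : Fin (2 ^ r), x t * dftRoot r ω ^ (t : ℕ) := by
  unfold dft dftRoot
  congr 1
  refine sum_congr rfl fun t _ => ?_
  rw [← Complex.exp_nat_mul]
  congr 2
  push_cast
  ring

lemma norm_dftRoot (r : ℕ) (ω : ℤ) : ‖dftRoot r ω‖ = 1 :=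
  Complex.norm_exp_I_mul_ofReal _

lemma dftRoot_pow_two_pow (r : ℕ) (ω : ℤ) : dftRoot r ω ^ 2 ^ r = 1 := by
  rw [dftRoot, ← Complex.exp_nat_mul, ← Complex.exp_int_mul_two_pi_mul_I ω]
  congr 1
  push_cast
  field_simp

lemma four_mul_abs_div_le_norm_dftRoot_sub_one {r : ℕ} {ω : ℤ} (hω : 2 * |ω| ≤ 2 ^ r) :
    4 * |(ω : ℝ)| / 2 ^ r ≤ ‖dftRoot r ω - 1‖ := by
  have hω' : 2 * |(ω : ℝ)| ≤ 2 ^ r := by exact_mod_cast hω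
  have habs : |2 * π * ω / 2 ^ r| = 2 * π * |(ω : ℝ)| / 2 ^ r := by
    rw [abs_div, abs_mul, abs_of_pos (by positivity : (0 : ℝ) < 2 * π),
      abs_of_pos (by positivity : (0 : ℝ) < 2 ^ r)]
  have h := two_div_pi_mul_abs_le_norm_exp_I_mul_ofReal_sub_one_s12 (x := 2 * π * ω / 2 ^ r) (by
    rw [habs, div_le_iff₀ (by positivity)]
    nlinarith [pi_pos])
  rw [habs] at h
  refine le_of_eq_of_le ?_ h
  field_simp
  ring

lemma dftRoot_ne_one {r : ℕ} {ω : ℤ} (hω0 : ω ≠ 0) (hω : 2 * |ω| ≤ 2 ^ r) : dftRoot r ω ≠ 1 := by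
  rw [← sub_ne_zero, ← norm_pos_iff]
  refine lt_of_lt_of_le ?_ (four_mul_abs_div_le_norm_dftRoot_sub_one hω)
  have : (ω : ℝ) ≠ 0 := by exact_mod_cast hω0
  positivity

lemma dft_haarPsi (r : ℕ) (ω : ℤ) :
    dft r (haarPsi r) ω = ((2 : ℂ) ^ r)⁻¹ * ∑ t ∈ range (2 ^ r), dftRoot r ω ^ t := by
  simp only [dft_eq_sum_dftRoot_pow, haarPsi, two_rpow_neg_div_two]
  rw [Fin.sum_univ_eq_sum_range (fun t => (((√(2 ^ r))⁻¹ : ℝ) : ℂ) * dftRoot r ω ^ t),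
    ← mul_sum, ← mul_assoc, inv_sqrt_mul_inv_sqrt_two_pow]

lemma haarPhi_succ_zero_zero (s : ℕ) (t : Fin (2 ^ (s + 1))) :
    haarPhi (s + 1) 0 0 t =
      if (t : ℕ) < 2 ^ s then (((√(2 ^ (s + 1)))⁻¹ : ℝ) : ℂ)
      else -(((√(2 ^ (s + 1)))⁻¹ : ℝ) : ℂ) := by
  have ht : (t : ℕ) < 2 ^ s + 2 ^ s := by simpa [pow_succ, mul_two] using t.isLt
  simp only [haarPhi, Nat.sub_zero, Nat.add_sub_cancel, zero_mul, zero_add, one_mul, Nat.zero_le,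
    true_and, Nat.cast_zero, zero_sub, two_rpow_neg_div_two, pow_succ, mul_two]
  split_ifs <;> first | rfl | omega

lemma dft_haarPhi_succ_zero_zero (s : ℕ) (ω : ℤ) :
    dft (s + 1) (haarPhi (s + 1) 0 0) ω =
      ((2 : ℂ) ^ (s + 1))⁻¹ *
        ((1 - dftRoot (s + 1) ω ^ 2 ^ s) * ∑ t ∈ range (2 ^ s), dftRoot (s + 1) ω ^ t) := by
  set ζ := dftRoot (s + 1) ω
  set c : ℂ := (((√(2 ^ (s + 1)))⁻¹ : ℝ) : ℂ)
  have hfirst : ∑ t ∈ range (2 ^ s), (if t < 2 ^ s then c else -c) * ζ ^ t =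
      c * ∑ t ∈ range (2 ^ s), ζ ^ t := by
    rw [mul_sum]
    exact sum_congr rfl fun t ht => by rw [if_pos (mem_range.1 ht)]
  have hsecond : ∑ t ∈ range (2 ^ s), (if 2 ^ s + t < 2 ^ s then c else -c) * ζ ^ (2 ^ s + t) =
      -c * ζ ^ 2 ^ s * ∑ t ∈ range (2 ^ s), ζ ^ t := by
    rw [mul_sum]
    exact sum_congr rfl fun t _ => by rw [if_neg (by omega), pow_add]; ring
  rw [dft_eq_sum_dftRoot_pow]
  simp only [haarPhi_succ_zero_zero]
  rw [Fin.sum_univ_eq_sum_range (fun t => (if t < 2 ^ s then c else -c) * ζ ^ t),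
    show (2 : ℕ) ^ (s + 1) = 2 ^ s + 2 ^ s by ring, sum_range_add, hfirst, hsecond]
  linear_combination (∑ t ∈ range (2 ^ s), ζ ^ t - ζ ^ 2 ^ s * ∑ t ∈ range (2 ^ s), ζ ^ t) *
    inv_sqrt_mul_inv_sqrt_two_pow (s + 1)

section Band

variable {r j : ℕ} {ω : ℤ}

lemma abs_mem_Icc_of_mem_bandW (hj : j ≠ 0) (hω : ω ∈ bandW j) :
    |ω| ∈ Icc ((2 : ℤ) ^ (j - 1)) (2 ^ j) := by
  obtain ⟨i, rfl⟩ := Nat.exists_eq_succ_of_ne_zero hj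
  simp only [bandW, if_neg hj, mem_union, mem_Icc, Nat.succ_sub_one, pow_succ] at hω ⊢
  have : (0 : ℤ) < 2 ^ i := by positivity
  rcases hω with h | h
  · rw [abs_of_neg (by omega)]; omega
  · rw [abs_of_pos (by omega)]; omega

lemma card_bandW_le (hj : j ≠ 0) : #(bandW j) ≤ 2 ^ j := by
  obtain ⟨i, rfl⟩ := Nat.exists_eq_succ_of_ne_zero hj
  refine (card_union_le _ _).trans ?_
  simp only [Int.card_Icc, Nat.succ_sub_one]
  have h : ((2 ^ (i + 1) : ℕ) : ℤ) = 2 * 2 ^ i := by push_cast; ring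
  rw [pow_succ] at *
  omega

lemma ne_zero_of_mem_bandW (hj : j ≠ 0) (hω : ω ∈ bandW j) : ω ≠ 0 := by
  intro h0
  have h := (mem_Icc.1 (abs_mem_Icc_of_mem_bandW hj hω)).1
  rw [h0, abs_zero] at h
  have : (0 : ℤ) < 2 ^ (j - 1) := by positivity
  omega

lemma two_mul_abs_le_of_mem_bandW (hj : j ≠ 0) (hjr : j ≤ r - 1) (hω : ω ∈ bandW j) :
    2 * |ω| ≤ 2 ^ r := by
  have hω' := (mem_Icc.1 (abs_mem_Icc_of_mem_bandW hj hω)).2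
  calc 2 * |ω| ≤ 2 * 2 ^ (r - 1) := by gcongr; exact hω'.trans (pow_le_pow_right₀ one_le_two hjr)
    _ = 2 ^ r := by rw [← pow_succ']; congr 1; omega

lemma dft_haarPsi_eq_zero_of_mem_bandW (hj : j ≠ 0) (hjr : j ≤ r - 1) (hω : ω ∈ bandW j) :
    dft r (haarPsi r) ω = 0 := by
  rw [dft_haarPsi, geom_sum_eq_zero_of_pow_eq_one (dftRoot_ne_one (ne_zero_of_mem_bandW hj hω)
    (two_mul_abs_le_of_mem_bandW hj hjr hω)) (dftRoot_pow_two_pow r ω), mul_zero]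

lemma norm_dft_haarPhi_le_of_mem_bandW (hj : j ≠ 0) (hjr : j ≤ r - 1) (hω : ω ∈ bandW j) :
    ‖dft r (haarPhi r 0 0) ω‖ ≤ 2 / 2 ^ j := by
  obtain ⟨s, rfl⟩ := Nat.exists_eq_add_one_of_ne_zero (show r ≠ 0 by omega)
  have hω2 := two_mul_abs_le_of_mem_bandW hj hjr hω
  set ζ := dftRoot (s + 1) ω
  have hζ : ζ ≠ 1 := dftRoot_ne_one (ne_zero_of_mem_bandW hj hω) hω2
  have hgap : 2 * 2 ^ j / 2 ^ (s + 1) ≤ ‖ζ - 1‖ := by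
    refine le_trans ?_ (four_mul_abs_div_le_norm_dftRoot_sub_one hω2)
    have hlo := (mem_Icc.1 (abs_mem_Icc_of_mem_bandW hj hω)).1
    have hlo' : (2 : ℝ) ^ (j - 1) ≤ |(ω : ℝ)| := by exact_mod_cast hlo
    have h2j : (2 : ℝ) ^ j = 2 * 2 ^ (j - 1) := by rw [← pow_succ']; congr 1; omega
    rw [h2j]
    gcongr ?_ / _
    linarith
  have hhalf : ‖1 - ζ ^ 2 ^ s‖ ≤ 2 := by
    calc ‖1 - ζ ^ 2 ^ s‖ ≤ ‖(1 : ℂ)‖ + ‖ζ ^ 2 ^ s‖ := norm_sub_le _ _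
      _ = 2 := by rw [norm_pow, norm_dftRoot, one_pow, norm_one]; norm_num
  have hpos : 0 < ‖ζ - 1‖ := norm_pos_iff.2 (sub_ne_zero.2 hζ)
  rw [dft_haarPhi_succ_zero_zero, norm_mul, norm_mul, norm_inv, norm_pow, Complex.norm_two]
  calc ((2 : ℝ) ^ (s + 1))⁻¹ * (‖1 - ζ ^ 2 ^ s‖ * ‖∑ t ∈ range (2 ^ s), ζ ^ t‖)
      ≤ ((2 : ℝ) ^ (s + 1))⁻¹ * (2 * (2 / ‖ζ - 1‖)) := by
        gcongr
        exact norm_geom_sum_le_of_norm_eq_one (norm_dftRoot _ _) hζ _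
    _ ≤ 2 / 2 ^ j := by
        rw [div_le_iff₀ (by positivity)] at hgap
        rw [inv_mul_le_iff₀ (by positivity)]
        field_simp
        linarith

lemma sum_bandW_norm_sq_dft_haar_le (hj : j ≠ 0) (hjr : j ≤ r - 1) (a b : ℂ) :
    ∑ ω ∈ bandW j, ‖dft r (haarPsi r) ω * a + dft r (haarPhi r 0 0) ω * b‖ ^ 2 ≤
      4 / 2 ^ j * ‖b‖ ^ 2 := by
  calc ∑ ω ∈ bandW j, ‖dft r (haarPsi r) ω * a + dft r (haarPhi r 0 0) ω * b‖ ^ 2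
      ≤ ∑ ω ∈ bandW j, (2 / 2 ^ j) ^ 2 * ‖b‖ ^ 2 := by
        refine sum_le_sum fun ω hω => ?_
        rw [dft_haarPsi_eq_zero_of_mem_bandW hj hjr hω, zero_mul, zero_add, norm_mul, mul_pow]
        gcongr
        exact norm_dft_haarPhi_le_of_mem_bandW hj hjr hω
    _ = #(bandW j) * ((2 / 2 ^ j) ^ 2 * ‖b‖ ^ 2) := by rw [sum_const, nsmul_eq_mul]
    _ ≤ 2 ^ j * ((2 / 2 ^ j) ^ 2 * ‖b‖ ^ 2) := by gcongr; exact_mod_cast card_bandW_le hj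
    _ = 4 / 2 ^ j * ‖b‖ ^ 2 := by field_simp; ring

end Band

lemma norm_sq_toEuclideanLin_fin_two {𝕜 m : Type*} [RCLike 𝕜] [Fintype m]
    (A : Matrix m (Fin 2) 𝕜) (z : EuclideanSpace 𝕜 (Fin 2)) :
    ‖Matrix.toEuclideanLin A z‖ ^ 2 = ∑ i, ‖A i 0 * z 0 + A i 1 * z 1‖ ^ 2 := by
  simp [EuclideanSpace.norm_sq_eq, Matrix.mulVec, dotProduct, Fin.sum_univ_two]

lemma norm_toEuclideanLin_fin_two_le {𝕜 m : Type*} [RCLike 𝕜] [Fintype m]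
    {A : Matrix m (Fin 2) 𝕜} {c : ℝ} (hc : 0 ≤ c)
    (h : ∀ a b : 𝕜, ∑ i, ‖A i 0 * a + A i 1 * b‖ ^ 2 ≤ c ^ 2 * (‖a‖ ^ 2 + ‖b‖ ^ 2)) :
    ‖LinearMap.toContinuousLinearMap (Matrix.toEuclideanLin A)‖ ≤ c := by
  refine ContinuousLinearMap.opNorm_le_bound _ hc fun z => ?_
  refine le_of_pow_le_pow_left₀ two_ne_zero (by positivity) ?_
  rw [LinearMap.coe_toContinuousLinearMap', norm_sq_toEuclideanLin_fin_two, mul_pow,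
    EuclideanSpace.norm_sq_eq, Fin.sum_univ_two]
  exact h (z 0) (z 1)

lemma UopNorm_zero_le {r j : ℕ} (hj : j ≠ 0) (hjr : j ≤ r - 1) :
    UopNorm r j 0 ≤ 2 / √(2 ^ j) := by
  refine norm_toEuclideanLin_fin_two_le (A := Umat r j 0) (by positivity) fun a b => ?_
  simp only [Umat, Uentry, if_true, Fin.val_zero, Fin.val_one, one_ne_zero, if_false]
  rw [sum_coe_sort (bandW j) (fun ω => ‖dft r (haarPsi r) ω * a + dft r (haarPhi r 0 0) ω * b‖ ^ 2),
    div_pow, Real.sq_sqrt (by positivity)]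
  calc _ ≤ 4 / 2 ^ j * ‖b‖ ^ 2 := sum_bandW_norm_sq_dft_haar_le hj hjr a b
    _ ≤ 4 / 2 ^ j * (‖a‖ ^ 2 + ‖b‖ ^ 2) := by gcongr; exact le_add_of_nonneg_left (sq_nonneg _)
    _ = 2 ^ 2 / 2 ^ j * (‖a‖ ^ 2 + ‖b‖ ^ 2) := by norm_num

/-- There are universal constants `C, C' > 0` such that for every `r ≥ 1` and `1 ≤ j ≤ r-1`:
for every `z ∈ ℂ²` with `‖z‖₂ = 1` one has
`∑_{ω ∈ W_j} |Fψ(ω) z₀ + Fφ_{0,0}(ω) z₁|² ≤ C 2^{-j}`; equivalently,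
`‖U_{j0}‖₂ ≤ C' 2^{-j/2}`. -/
theorem Uj0_bound : ∃ C : ℝ, 0 < C ∧ ∃ C' : ℝ, 0 < C' ∧
    ∀ r j : ℕ, 1 ≤ r → 1 ≤ j → j ≤ r - 1 →
      (∀ z : Fin 2 → ℂ, ‖z 0‖^2 + ‖z 1‖^2 = 1 →
        ∑ ω ∈ bandW j,
          ‖dft r (haarPsi r) ω * z 0 + dft r (haarPhi r 0 0) ω * z 1‖^2
            ≤ C * (2:ℝ)^(-(j:ℝ))) ∧
      UopNorm r j 0 ≤ C' * (2:ℝ)^(-(j:ℝ)/2) := by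
  refine ⟨4, four_pos, 2, two_pos, fun r j _ hj hjr => ⟨fun z hz => ?_, ?_⟩⟩
  · have hz1 : ‖z 1‖ ^ 2 ≤ 1 := by linarith [sq_nonneg ‖z 0‖]
    calc _ ≤ 4 / 2 ^ j * ‖z 1‖ ^ 2 := sum_bandW_norm_sq_dft_haar_le (by omega) hjr (z 0) (z 1)
      _ ≤ 4 / 2 ^ j := mul_le_of_le_one_right (by positivity) hz1
      _ = 4 * (2 : ℝ) ^ (-(j : ℝ)) := by
        rw [Real.rpow_neg zero_le_two, Real.rpow_natCast, div_eq_mul_inv]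
  · rw [two_rpow_neg_div_two, ← div_eq_mul_inv]
    exact UopNorm_zero_le (by omega) hjr
end
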